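/- arXiv:1304.7453 — 2 statements merged into one kernel-verified Lean document; each statement's English description precedes it below -/
import Mathlib

section
/- Let E be a right Hilbert C*-module over a C*-algebra A such that the C*-algebra K(E) of compact operators on E is unital. Then E is self-dual: every bounded A-linear map φ : E → A is of the form φ(x) = ⟨y, x⟩ for some y ∈ E. -/
/-! Writing the identity as a finite sum of rank-one operators, `x = ∑ i, uᵢ ⟨vᵢ, x⟩`, an
`A`-linear `φ` expands as `φ x = ∑ i, φ(uᵢ) ⟨vᵢ, x⟩ = ⟨∑ i, vᵢ φ(uᵢ)*, x⟩`. -/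

open scoped RightActions

/-- The Hilbert C⋆-module class as Mathlib defined it in December 2024: a *right* `A`-module
structure given by `SMul Aᵐᵒᵖ E`, with inner product satisfying `⟪x, y <• a⟫ = ⟪x, y⟫ * a`. -/
class RightCStarModule (A : outParam <| Type*) (E : Type*) [NonUnitalSemiring A] [StarRing A]
    [Module ℂ A] [AddCommGroup E] [Module ℂ E] [PartialOrder A] [SMul Aᵐᵒᵖ E] [Norm A] [Norm E]
    extends Inner A E where
  inner_add_right {x} {y} {z} : inner x (y + z) = inner x y + inner x z
  inner_self_nonneg {x} : 0 ≤ inner x x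
  inner_self {x} : inner x x = 0 ↔ x = 0
  inner_op_smul_right {a : A} {x y : E} : inner x (y <• a) = inner x y * a
  inner_smul_right_complex {z : ℂ} {x} {y} : inner x (z • y) = z • inner x y
  star_inner x y : star (inner x y) = inner y x
  norm_eq_sqrt_norm_inner_self x : ‖x‖ = √‖inner x x‖

namespace RightCStarModule

variable {A E : Type*} [NonUnitalRing A] [StarRing A] [Module ℂ A] [AddCommGroup E]
  [Module ℂ E] [PartialOrder A] [SMul Aᵐᵒᵖ E] [Norm A] [Norm E] [RightCStarModule A E]

def innerRight (x : E) : E →+ A :=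
  AddMonoidHom.mk' (inner A x) fun _ _ => inner_add_right

theorem inner_sum_right {ι : Type*} (s : Finset ι) (x : E) (w : ι → E) :
    inner A x (∑ i ∈ s, w i) = ∑ i ∈ s, inner A x (w i) :=
  map_sum (innerRight x) w s

theorem inner_sum_left {ι : Type*} (s : Finset ι) (w : ι → E) (x : E) :
    inner A (∑ i ∈ s, w i) x = ∑ i ∈ s, inner A (w i) x := by
  rw [← star_inner, inner_sum_right, star_sum]
  simp only [star_inner]

theorem inner_op_smul_left (x y : E) (a : A) : inner A (x <• a) y = star a * inner A x y := by
  rw [← star_inner, inner_op_smul_right, star_mul, star_inner]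

theorem eq_inner_of_sum_rankOne_eq_id {ι : Type*} [Fintype ι] (u v : ι → E)
    (hid : ∀ x : E, ∑ i, u i <• inner A (v i) x = x)
    (φ : E →+ A) (hφ : ∀ (x : E) (a : A), φ (x <• a) = φ x * a) (x : E) :
    φ x = inner A (∑ i, v i <• star (φ (u i))) x := by
  calc φ x = φ (∑ i, u i <• inner A (v i) x) := by rw [hid]
    _ = ∑ i, φ (u i) * inner A (v i) x := by simp only [map_sum, hφ]
    _ = inner A (∑ i, v i <• star (φ (u i))) x := by
      simp only [inner_sum_left, inner_op_smul_left, star_star]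

end RightCStarModule

theorem stmt_3_general (A E : Type*) [NonUnitalCStarAlgebra A] [PartialOrder A]
    [NormedAddCommGroup E] [Module ℂ E] [SMul Aᵐᵒᵖ E]
    [RightCStarModule A E]
    -- `K(E)` is unital: the identity is a finite sum of rank-one operators
    (hunit : ∃ (n : ℕ) (u v : Fin n → E),
      ∀ x : E, ∑ i, (u i) <• (inner A (v i) x : A) = x)
    (φ : E →+ A)
    (hφ_mod : ∀ (x : E) (a : A), φ (x <• a) = φ x * a) :
    ∃ y : E, ∀ x : E, φ x = (inner A y x : A) := by
  obtain ⟨n, u, v, hid⟩ := hunit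
  exact ⟨_, RightCStarModule.eq_inner_of_sum_rankOne_eq_id u v hid φ hφ_mod⟩

/-- Let `E` be a right Hilbert C*-module over a C*-algebra `A` such that `K(E)` is unital,
i.e. there are `u₁, …, uₙ, v₁, …, vₙ ∈ E` with `∑ i, θ_{uᵢ,vᵢ} = id_E`.  Then `E` is
self-dual: every bounded `A`-linear map `φ : E → A` is of the form `φ = ⟨y, ·⟩`
for some `y ∈ E`. -/
theorem stmt_3 (A E : Type*) [NonUnitalCStarAlgebra A] [PartialOrder A]
    [StarOrderedRing A] [NormedAddCommGroup E] [Module ℂ E] [SMul Aᵐᵒᵖ E]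
    [RightCStarModule A E]
    -- `K(E)` is unital: the identity is a finite sum of rank-one operators
    (hunit : ∃ (n : ℕ) (u v : Fin n → E),
      ∀ x : E, ∑ i, (u i) <• (inner A (v i) x : A) = x)
    (φ : E →+ A) (hφ_cont : Continuous φ)
    (hφ_mod : ∀ (x : E) (a : A), φ (x <• a) = φ x * a) :
    ∃ y : E, ∀ x : E, φ x = (inner A y x : A) :=
  stmt_3_general A E hunit φ hφ_mod
end

section
/- Let A be a C*-algebra and H a Hilbert space with A ⊗ K(H) (minimal tensor product) a C*-algebra of compact operators. If b ∈ A is positive with spectral projection χ_{1}(b) ∈ A (corresponding to eigenvalue 1) and q ∈ K(H) is a rank-one projection, then the corner χ_{1}(b)·A·χ_{1}(b) is finite dimensional. -/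
/-!
Slicing at the projection `q ≠ 0`, `a ↦ a ⊗ q`, is linear and, as `‖a ⊗ q‖ = ‖a‖ ‖q‖`,
injective. It sends `p a p` to `e (a ⊗ q) e` with `e = p ⊗ q`, a projection of `A ⊗ K(H)`,
so it embeds the corner `pAp` into the finite-dimensional corner `e (A ⊗ K(H)) e`.
-/

open Submodule Function

theorem injective_of_norm_map_eq_norm_mul {F E G : Type*} [NormedAddGroup E]
    [SeminormedAddGroup G] [FunLike F E G] [AddMonoidHomClass F E G] (f : F) {c : ℝ}
    (hc : c ≠ 0) (h : ∀ x, ‖f x‖ = ‖x‖ * c) : Injective f :=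
  (injective_iff_map_eq_zero f).2 fun x hx => by simpa [hx, hc] using (h x).symm

theorem finiteDimensional_span_corner_of_injective {K A B : Type*} [Field K]
    [Mul A] [AddCommGroup A] [Module K A] [Mul B] [AddCommGroup B] [Module K B]
    (L : A →ₗ[K] B) (hL : Injective L) {p : A} {e : B}
    (hLp : ∀ a, L (p * a * p) = e * L a * e)
    (hB : FiniteDimensional K (span K {x : B | ∃ z, x = e * z * e})) :
    FiniteDimensional K (span K {x : A | ∃ a, x = p * a * p}) := by
  have hmap : (span K {x : A | ∃ a, x = p * a * p}).map L ≤
      span K {x : B | ∃ z, x = e * z * e} := by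
    rw [map_span]
    refine span_mono ?_
    rintro _ ⟨_, ⟨a, rfl⟩, rfl⟩
    exact ⟨L a, hLp a⟩
  have := finiteDimensional_of_le hmap
  exact (equivMapOfInjective L hL _).symm.finiteDimensional

theorem stmt_17_general (A H T : Type*) [NonUnitalCStarAlgebra A]
    [NormedAddCommGroup H] [InnerProductSpace ℂ H] [CompleteSpace H]
    [NonUnitalCStarAlgebra T]
    (t : A → (H →L[ℂ] H) → T)
    (ht_addl : ∀ a a' k, t (a + a') k = t a k + t a' k)
    (ht_smul : ∀ (z : ℂ) a k, t (z • a) k = z • t a k ∧ t a (z • k) = z • t a k)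
    (ht_mul : ∀ a a' k k', t a k * t a' k' = t (a * a') (k * k'))
    (ht_star : ∀ a k, star (t a k) = t (star a) (star k))
    (ht_norm : ∀ a k, ‖t a k‖ = ‖a‖ * ‖k‖)
    -- `A ⊗ K(H)` is a C*-algebra of compact operators: all of its corners by
    -- projections are finite dimensional
    (hTcpt : ∀ e : T, IsSelfAdjoint e → IsIdempotentElem e →
      FiniteDimensional ℂ ↥(Submodule.span ℂ {x : T | ∃ z : T, x = e * z * e}))
    (p : A) (hp_sa : IsSelfAdjoint p) (hp_idem : IsIdempotentElem p)
    (q : H →L[ℂ] H) (hq_sa : IsSelfAdjoint q) (hq_idem : IsIdempotentElem q)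
    (hq_rank1 : ∃ ξ : H, ξ ≠ 0 ∧ LinearMap.range (q : H →ₗ[ℂ] H) = Submodule.span ℂ {ξ}) :
    FiniteDimensional ℂ ↥(Submodule.span ℂ {x : A | ∃ a : A, x = p * a * p}) := by
  obtain ⟨ξ, hξ, hrange⟩ := hq_rank1
  have hq : q ≠ 0 := by
    rintro rfl
    rw [ContinuousLinearMap.toLinearMap_zero, LinearMap.range_zero, eq_comm,
      span_singleton_eq_bot] at hrange
    exact hξ hrange
  let L : A →ₗ[ℂ] T :=
    { toFun := (t · q)
      map_add' := (ht_addl · · q)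
      map_smul' := fun z a => (ht_smul z a q).1 }
  have hL : Injective L :=
    injective_of_norm_map_eq_norm_mul L (norm_ne_zero_iff.2 hq) (ht_norm · q)
  refine finiteDimensional_span_corner_of_injective L hL (e := t p q) (fun a => ?_)
    (hTcpt _ ?_ ?_)
  · change t (p * a * p) q = t p q * t a q * t p q
    rw [ht_mul, ht_mul, hq_idem.eq, hq_idem.eq]
  · rw [IsSelfAdjoint, ht_star, hp_sa.star_eq, hq_sa.star_eq]
  · rw [IsIdempotentElem, ht_mul, hp_idem.eq, hq_idem.eq]

/-- Let `A` be a C*-algebra and `H` a Hilbert space, and let `T` (with the structure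
map `t`) realize the minimal tensor product `A ⊗ K(H)`.  Assume `A ⊗ K(H)` is a
C*-algebra of compact operators, so that every projection in it has finite-dimensional
corner.  If `b ∈ A` is positive with spectral projection `p = χ_{{1}}(b) ∈ A` (so
`b p = p b = p`), and `q ∈ K(H)` is a rank-one projection, then the corner `pAp` is
finite dimensional. -/
theorem stmt_17 (A H T : Type*) [NonUnitalCStarAlgebra A]
    [NormedAddCommGroup H] [InnerProductSpace ℂ H] [CompleteSpace H]
    [NonUnitalCStarAlgebra T]
    (t : A → (H →L[ℂ] H) → T)
    (ht_addl : ∀ a a' k, t (a + a') k = t a k + t a' k)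
    (ht_addr : ∀ a k k', t a (k + k') = t a k + t a k')
    (ht_smul : ∀ (z : ℂ) a k, t (z • a) k = z • t a k ∧ t a (z • k) = z • t a k)
    (ht_mul : ∀ a a' k k', t a k * t a' k' = t (a * a') (k * k'))
    (ht_star : ∀ a k, star (t a k) = t (star a) (star k))
    (ht_norm : ∀ a k, ‖t a k‖ = ‖a‖ * ‖k‖)
    (ht_dense : closure (Submodule.span ℂ
      {z : T | ∃ (a : A) (k : H →L[ℂ] H), IsCompactOperator (⇑k) ∧ z = t a k} : Set T)
      = Set.univ)
    -- `A ⊗ K(H)` is a C*-algebra of compact operators: all of its corners by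
    -- projections are finite dimensional
    (hTcpt : ∀ e : T, IsSelfAdjoint e → IsIdempotentElem e →
      FiniteDimensional ℂ ↥(Submodule.span ℂ {x : T | ∃ z : T, x = e * z * e}))
    (b : A) (hb_pos : ∃ c : A, b = star c * c)
    (p : A) (hp_sa : IsSelfAdjoint p) (hp_idem : IsIdempotentElem p)
    -- `p` is the spectral projection of `b` for the eigenvalue `1`
    (hbp : b * p = p ∧ p * b = p)
    (q : H →L[ℂ] H) (hq_sa : IsSelfAdjoint q) (hq_idem : IsIdempotentElem q)
    (hq_rank1 : ∃ ξ : H, ξ ≠ 0 ∧ LinearMap.range (q : H →ₗ[ℂ] H) = Submodule.span ℂ {ξ}) :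
    FiniteDimensional ℂ ↥(Submodule.span ℂ {x : A | ∃ a : A, x = p * a * p}) :=
  stmt_17_general A H T t ht_addl ht_smul ht_mul ht_star ht_norm hTcpt p hp_sa hp_idem q hq_sa
    hq_idem hq_rank1
end
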